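/- arXiv:1905.08866 — 3 statements merged into one kernel-verified Lean document; each statement's English description precedes it below -/
import Mathlib

section
/- Let p_ξ, p_ν : [0,∞) → (0,∞) be measurable with p_ν locally integrable, and define measures dξ = p_ξ dx and dν = p_ν dx on [0,∞). Suppose B := sup_{x>0} ξ([x,∞)) · ∫₀ˣ (1/p_ν(t)) dt is finite. Then for every continuously differentiable function f on [0,∞) with compact support and f(0) = 0, one has ∫₀^∞ f(x)² p_ξ(x) dx ≤ 4B ∫₀^∞ f'(x)² p_ν(x) dx. -/
open MeasureTheory Filter Set
open scoped ENNReal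

/-!
Put `h(x) = ν (0, x]` for `dν = dt / p_ν`. Writing `f(x) = ∫₀ˣ f'` and applying Cauchy–Schwarz
with the weight `√h · p_ν` gives `f(x)² ≤ (∫₀ˣ f'² p_ν √h) · ∫₀ˣ dν / √h ≤ 2 √h(x) ∫₀ˣ f'² p_ν √h`.
Integrating against `ξ` and exchanging the order of integration leaves `∫_{[t,∞)} √h dξ`, which is
at most `2B / √h(t)` since `ξ [x, ∞) ≤ B / h(x)`. Both one-dimensional estimates come from the
layer-cake formula: for `∫₀ˣ dν / √h` one needs that `ν` has no atoms, for `∫_{[t,∞)} √h dξ` that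
`h` is right-continuous.
-/

lemma lintegral_mul_sq_le {α : Type*} [MeasurableSpace α] (μ : Measure α) {u v : α → ℝ≥0∞}
    (hu : AEMeasurable u μ) (hv : AEMeasurable v μ) :
    (∫⁻ a, u a * v a ∂μ) ^ 2 ≤ (∫⁻ a, u a ^ 2 ∂μ) * ∫⁻ a, v a ^ 2 ∂μ := by
  have hsq : ∀ y : ℝ≥0∞, (y ^ (1 / 2 : ℝ)) ^ 2 = y := fun y => by
    rw [← ENNReal.rpow_natCast, ← ENNReal.rpow_mul]; norm_num
  have h := ENNReal.lintegral_mul_le_Lp_mul_Lq μ Real.HolderConjugate.two_two hu hv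
  simp only [Pi.mul_apply, ENNReal.rpow_two] at h
  calc (∫⁻ a, u a * v a ∂μ) ^ 2
      ≤ ((∫⁻ a, u a ^ 2 ∂μ) ^ (1 / 2 : ℝ) * (∫⁻ a, v a ^ 2 ∂μ) ^ (1 / 2 : ℝ)) ^ 2 := by gcongr
    _ = (∫⁻ a, u a ^ 2 ∂μ) * ∫⁻ a, v a ^ 2 ∂μ := by rw [mul_pow, hsq, hsq]

lemma enorm_integral_sq_le_lintegral_mul_lintegral_inv {α : Type*} [MeasurableSpace α]
    (μ : Measure α) {g k : α → ℝ} (hg : Measurable g) (hk : Measurable k)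
    (hk_pos : ∀ᵐ a ∂μ, 0 < k a) :
    ‖∫ a, g a ∂μ‖ₑ ^ 2 ≤
      (∫⁻ a, ENNReal.ofReal (g a ^ 2 * k a) ∂μ) * ∫⁻ a, ENNReal.ofReal (k a)⁻¹ ∂μ := by
  have hsq : ∀ y : ℝ, ENNReal.ofReal √y ^ 2 = ENNReal.ofReal y := fun y => by
    rcases le_total 0 y with hy | hy
    · rw [← ENNReal.ofReal_pow (Real.sqrt_nonneg y), Real.sq_sqrt hy]
    · rw [Real.sqrt_eq_zero'.2 hy, ENNReal.ofReal_of_nonpos hy]; simp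
  have hsplit : ∀ᵐ a ∂μ, ‖g a‖ₑ =
      ENNReal.ofReal √(g a ^ 2 * k a) * ENNReal.ofReal √(k a)⁻¹ := by
    filter_upwards [hk_pos] with a ha
    rw [← ENNReal.ofReal_mul (Real.sqrt_nonneg _), ← Real.sqrt_mul (by positivity),
      mul_assoc, mul_inv_cancel₀ ha.ne', mul_one, Real.sqrt_sq_eq_abs, Real.enorm_eq_ofReal_abs]
  calc ‖∫ a, g a ∂μ‖ₑ ^ 2 ≤ (∫⁻ a, ‖g a‖ₑ ∂μ) ^ 2 := by
        gcongr
        exact enorm_integral_le_lintegral_enorm g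
    _ = (∫⁻ a, ENNReal.ofReal √(g a ^ 2 * k a) * ENNReal.ofReal √(k a)⁻¹ ∂μ) ^ 2 := by
        rw [lintegral_congr_ae hsplit]
    _ ≤ _ := by
        refine (lintegral_mul_sq_le μ (by fun_prop) (by fun_prop)).trans_eq ?_
        simp only [hsq]

lemma lintegral_Ioi_ofReal_inv_sq {r : ℝ} (hr : 0 < r) :
    ∫⁻ l in Ioi r, ENNReal.ofReal (l ^ 2)⁻¹ = ENNReal.ofReal r⁻¹ := by
  have hpow : ∀ l ∈ Ioi r, ENNReal.ofReal (l ^ 2)⁻¹ = ENNReal.ofReal (l ^ (-2 : ℝ)) :=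
    fun l hl => by rw [Real.rpow_neg (hr.trans hl).le, Real.rpow_two]
  rw [setLIntegral_congr_fun measurableSet_Ioi hpow, ← ofReal_integral_eq_lintegral_ofReal
    (integrableOn_Ioi_rpow_of_lt (by norm_num) hr), integral_Ioi_rpow_of_lt (by norm_num) hr]
  · norm_num [Real.rpow_neg_one]
  · filter_upwards [ae_restrict_mem measurableSet_Ioi] with l hl
    exact Real.rpow_nonneg (hr.trans hl).le _

lemma lintegral_Ioi_le_of_le_mul_inv_sq_max {φ : ℝ → ℝ≥0∞} {r : ℝ} (hr : 0 < r) (c : ℝ≥0∞)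
    (hφ : ∀ l > 0, φ l ≤ c * ENNReal.ofReal (max r l ^ 2)⁻¹) :
    ∫⁻ l in Ioi 0, φ l ≤ 2 * c * ENNReal.ofReal r⁻¹ := by
  have hhead : ∫⁻ l in Ioc 0 r, ENNReal.ofReal (max r l ^ 2)⁻¹ = ENNReal.ofReal r⁻¹ := by
    rw [setLIntegral_congr_fun measurableSet_Ioc fun l hl => by rw [max_eq_left hl.2],
      setLIntegral_const, Real.volume_Ioc, sub_zero, ← ENNReal.ofReal_mul (by positivity)]
    congr 1; field_simp
  have htail : ∫⁻ l in Ioi r, ENNReal.ofReal (max r l ^ 2)⁻¹ = ENNReal.ofReal r⁻¹ := by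
    rw [setLIntegral_congr_fun measurableSet_Ioi fun l hl => by rw [max_eq_right hl.le],
      lintegral_Ioi_ofReal_inv_sq hr]
  calc ∫⁻ l in Ioi 0, φ l ≤ ∫⁻ l in Ioi 0, c * ENNReal.ofReal (max r l ^ 2)⁻¹ :=
        setLIntegral_mono' measurableSet_Ioi hφ
    _ = c * ∫⁻ l in Ioc 0 r ∪ Ioi r, ENNReal.ofReal (max r l ^ 2)⁻¹ := by
        rw [lintegral_const_mul _ (by fun_prop), Ioc_union_Ioi_eq_Ioi hr.le]
    _ = 2 * c * ENNReal.ofReal r⁻¹ := by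
        rw [lintegral_union measurableSet_Ioi Ioc_disjoint_Ioi_same, hhead, htail]; ring

lemma measure_le_of_forall_measure_Ioc_le {ν : Measure ℝ} [NullSingletonClass ν] {S : Set ℝ}
    (hS : BddAbove S) (hS_pos : S ⊆ Ioi 0) {C : ℝ≥0∞} (hC : ∀ s ∈ S, ν (Ioc 0 s) ≤ C) :
    ν S ≤ C := by
  rcases S.eq_empty_or_nonempty with rfl | hne
  · simp
  obtain ⟨u, hu_mono, hu_tend, hu_mem⟩ := exists_seq_tendsto_sSup hne hS
  have hsub : S ⊆ {sSup S} ∪ ⋃ n, Ioc 0 (u n) := by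
    intro s hs
    rcases (le_csSup hS hs).eq_or_lt with h | h
    · exact Or.inl h
    · obtain ⟨n, hn⟩ := (hu_tend.eventually (eventually_gt_nhds h)).exists
      exact Or.inr (mem_iUnion.2 ⟨n, hS_pos hs, hn.le⟩)
  calc ν S ≤ ν ({sSup S} ∪ ⋃ n, Ioc 0 (u n)) := measure_mono hsub
    _ ≤ ν {sSup S} + ν (⋃ n, Ioc 0 (u n)) := measure_union_le _ _
    _ = ⨆ n, ν (Ioc 0 (u n)) := by
        rw [measure_singleton, zero_add, Monotone.measure_iUnion]
        exact fun m n hmn => Ioc_subset_Ioc_right (hu_mono hmn)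
    _ ≤ C := iSup_le fun n => hC _ (hu_mem n)

lemma le_measure_Ioc_csInf {ν : Measure ℝ} (hν : ∀ s, ν (Ioc 0 s) ≠ ∞) {S : Set ℝ}
    (hne : S.Nonempty) (hS : BddBelow S) {C : ℝ≥0∞} (hC : ∀ s ∈ S, C ≤ ν (Ioc 0 s)) :
    C ≤ ν (Ioc 0 (sInf S)) := by
  obtain ⟨u, hu_anti, hu_tend, hu_mem⟩ := exists_seq_tendsto_sInf hne hS
  have hinter : ⋂ n, Ioc 0 (u n) = Ioc 0 (sInf S) := by
    ext x
    simp only [mem_iInter, mem_Ioc]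
    refine ⟨fun h => ⟨(h 0).1, ge_of_tendsto hu_tend (Eventually.of_forall fun n => (h n).2)⟩,
      fun h n => ⟨h.1, h.2.trans (csInf_le hS (hu_mem n))⟩⟩
  rw [← hinter, Antitone.measure_iInter (fun m n hmn => Ioc_subset_Ioc_right (hu_anti hmn))
    (fun n => measurableSet_Ioc.nullMeasurableSet) ⟨0, hν _⟩]
  exact le_iInf fun n => hC _ (hu_mem n)

lemma withDensity_ofReal_pos {α : Type*} [MeasurableSpace α] {μ : Measure α} {ρ : α → ℝ}
    (hρ : Measurable ρ) {s : Set α} (hs : 0 < μ s) (hρs : ∀ a ∈ s, 0 < ρ a) :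
    0 < μ.withDensity (fun a => ENNReal.ofReal (ρ a)) s := by
  rw [pos_iff_ne_zero, Ne, withDensity_apply_eq_zero' hρ.ennreal_ofReal.aemeasurable,
    inter_eq_self_of_subset_right fun a ha => by simpa using hρs a ha]
  exact hs.ne'

lemma lintegral_Ioi_lintegral_Ioc_mul (μ ν : Measure ℝ) [SFinite μ] [SFinite ν] (a : ℝ)
    {F P : ℝ → ℝ≥0∞} (hF : Measurable F) (hP : Measurable P) :
    ∫⁻ x in Ioi a, (∫⁻ t in Ioc a x, F t ∂ν) * P x ∂μ =
      ∫⁻ t in Ioi a, F t * ∫⁻ x in Ici t, P x ∂μ ∂ν := by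
  set Q : ℝ → ℝ → ℝ≥0∞ := fun x t =>
    {p : ℝ × ℝ | a < p.2 ∧ p.2 ≤ p.1}.indicator (fun p => F p.2 * P p.1) (x, t)
  have hQ : Measurable (Function.uncurry Q) :=
    ((hF.comp measurable_snd).mul (hP.comp measurable_fst)).indicator
      ((measurableSet_lt measurable_const measurable_snd).inter
        (measurableSet_le measurable_snd measurable_fst))
  have hinner : ∀ x, ∫⁻ t in Ioi a, Q x t ∂ν = (∫⁻ t in Ioc a x, F t ∂ν) * P x := by
    intro x
    have : ∀ t, Q x t = (Ioc a x).indicator (fun t => F t * P x) t := fun t => by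
      simp only [Q, indicator_apply, mem_ofPred_eq, mem_Ioc]
    simp_rw [this]
    rw [lintegral_indicator measurableSet_Ioc, Measure.restrict_restrict measurableSet_Ioc,
      inter_eq_self_of_subset_left Ioc_subset_Ioi_self, lintegral_mul_const _ hF]
  have houter : ∀ t ∈ Ioi a, ∫⁻ x in Ioi a, Q x t ∂μ = F t * ∫⁻ x in Ici t, P x ∂μ := by
    intro t ht
    have : ∀ x, Q x t = (Ici t).indicator (fun x => F t * P x) x := fun x => by
      simp [Q, indicator_apply, mem_Ioi.1 ht]
    simp_rw [this]
    rw [lintegral_indicator measurableSet_Ici, Measure.restrict_restrict measurableSet_Ici,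
      inter_eq_self_of_subset_left (Ici_subset_Ioi.2 ht), lintegral_const_mul _ hP]
  rw [← setLIntegral_congr_fun measurableSet_Ioi fun x _ => hinner x,
    lintegral_lintegral_swap hQ.aemeasurable, setLIntegral_congr_fun measurableSet_Ioi houter]

/-- The function `h₊` of the paper when `ν` has density `1 / p_ν` (junk value `0` where
`ν (0, x] = ∞`). -/
noncomputable def cumulativeMass (ν : Measure ℝ) (x : ℝ) : ℝ := (ν (Ioc 0 x)).toReal

@[fun_prop]
lemma measurable_cumulativeMass (ν : Measure ℝ) : Measurable (cumulativeMass ν) :=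
  (Monotone.measurable fun _ _ h => measure_mono (Ioc_subset_Ioc_right h)).ennreal_toReal

lemma ofReal_cumulativeMass {ν : Measure ℝ} {x : ℝ} (hx : ν (Ioc 0 x) ≠ ∞) :
    ENNReal.ofReal (cumulativeMass ν x) = ν (Ioc 0 x) :=
  ENNReal.ofReal_toReal hx

lemma cumulativeMass_nonneg (ν : Measure ℝ) (x : ℝ) : 0 ≤ cumulativeMass ν x :=
  ENNReal.toReal_nonneg

lemma lintegral_inv_sqrt_cumulativeMass_le (ν : Measure ℝ) [NullSingletonClass ν] {x : ℝ}
    (hx : ν (Ioc 0 x) ≠ ∞) :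
    ∫⁻ t in Ioc 0 x, ENNReal.ofReal (√(cumulativeMass ν t))⁻¹ ∂ν ≤
      2 * ENNReal.ofReal √(cumulativeMass ν x) := by
  rcases (cumulativeMass_nonneg ν x).eq_or_lt with hx0 | hx0
  · have : ν (Ioc 0 x) = 0 := by rw [← ofReal_cumulativeMass hx, ← hx0, ENNReal.ofReal_zero]
    rw [Measure.restrict_eq_zero.2 this, lintegral_zero_measure]
    positivity
  have hr : 0 < (√(cumulativeMass ν x))⁻¹ := by positivity
  -- Layer cake: `ν {t ≤ x | (√h t)⁻¹ > l} ≤ min (h x) l⁻²`, the second bound as `ν` has no atoms.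
  rw [lintegral_eq_lintegral_meas_lt (f := fun t => (√(cumulativeMass ν t))⁻¹) _
    (Eventually.of_forall fun t => by positivity)
    (measurable_cumulativeMass ν).sqrt.inv.aemeasurable]
  refine (lintegral_Ioi_le_of_le_mul_inv_sq_max hr 1 fun l hl => ?_).trans_eq (by
    rw [inv_inv, mul_one])
  rw [one_mul]
  rcases le_total l (√(cumulativeMass ν x))⁻¹ with hlr | hlr
  · rw [max_eq_left hlr, inv_pow, Real.sq_sqrt hx0.le, inv_inv, ofReal_cumulativeMass hx]
    exact (measure_mono (subset_univ _)).trans_eq (Measure.restrict_apply_univ _)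
  rw [max_eq_right hlr, Measure.restrict_apply' measurableSet_Ioc]
  refine measure_le_of_forall_measure_Ioc_le ⟨x, fun s hs => hs.2.2⟩ (fun s hs => hs.2.1) ?_
  rintro s ⟨hls, -, hsx⟩
  rw [← ofReal_cumulativeMass (ne_top_of_le_ne_top hx (measure_mono (Ioc_subset_Ioc_right hsx)))]
  apply ENNReal.ofReal_le_ofReal
  have hls' : l ^ 2 < (cumulativeMass ν s)⁻¹ := by
    rw [← Real.lt_sqrt hl.le, Real.sqrt_inv]
    exact hls
  rcases (cumulativeMass_nonneg ν s).eq_or_lt with hs0 | hs0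
  · rw [← hs0]
    positivity
  · exact ((lt_inv_comm₀ (by positivity) hs0).1 hls').le

lemma sqrt_cumulativeMass_mul_lintegral_Ici_le (ξ ν : Measure ℝ) (hν : ∀ s, ν (Ioc 0 s) ≠ ∞)
    {B : ℝ≥0∞} (hB : ∀ x > 0, ξ (Ici x) * ν (Ioc 0 x) ≤ B) {t : ℝ}
    (ht : 0 < cumulativeMass ν t) :
    ENNReal.ofReal √(cumulativeMass ν t) *
      ∫⁻ s in Ici t, ENNReal.ofReal √(cumulativeMass ν s) ∂ξ ≤ 2 * B := by
  have ht0 : 0 < t := by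
    by_contra! ht0
    simp [cumulativeMass, Ioc_eq_empty_of_le ht0] at ht
  have hmono : Monotone (cumulativeMass ν) := fun a b hab =>
    ENNReal.toReal_mono (hν b) (measure_mono (Ioc_subset_Ioc_right hab))
  have hr : 0 < √(cumulativeMass ν t) := Real.sqrt_pos.2 ht
  suffices ∫⁻ s in Ici t, ENNReal.ofReal √(cumulativeMass ν s) ∂ξ ≤
      2 * B * ENNReal.ofReal (√(cumulativeMass ν t))⁻¹ by
    grw [this, mul_left_comm, ← ENNReal.ofReal_mul hr.le, mul_inv_cancel₀ hr.ne',
      ENNReal.ofReal_one, mul_one]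
  -- Layer cake: `S = {s ≥ t | √h s > l}` lies in `[sInf S, ∞)`, and `h (sInf S) ≥ max (h t) l²`
  -- by right-continuity, so `ξ S ≤ B / max (h t) l²`.
  rw [lintegral_eq_lintegral_meas_lt (f := fun s => √(cumulativeMass ν s)) _
    (Eventually.of_forall fun t => by positivity) (measurable_cumulativeMass ν).sqrt.aemeasurable]
  refine lintegral_Ioi_le_of_le_mul_inv_sq_max hr B fun l hl => ?_
  rw [Measure.restrict_apply' measurableSet_Ici]
  set S := {s | l < √(cumulativeMass ν s)} ∩ Ici t
  rcases S.eq_empty_or_nonempty with hS | hS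
  · simp [hS]
  have hS_bdd : BddBelow S := ⟨t, fun s hs => hs.2⟩
  have ha : t ≤ sInf S := le_csInf hS fun s hs => hs.2
  have hmass : ENNReal.ofReal (max (√(cumulativeMass ν t)) l ^ 2) ≤ ν (Ioc 0 (sInf S)) := by
    refine le_measure_Ioc_csInf hν hS hS_bdd fun s ⟨hls, hts⟩ => ?_
    rw [← ofReal_cumulativeMass (hν s), ← Real.sq_sqrt (cumulativeMass_nonneg ν s)]
    apply ENNReal.ofReal_le_ofReal
    gcongr
    exact max_le (Real.sqrt_le_sqrt (hmono hts)) hls.le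
  have hprod : ξ S * ENNReal.ofReal (max (√(cumulativeMass ν t)) l ^ 2) ≤ B :=
    (mul_le_mul' (measure_mono fun s hs => csInf_le hS_bdd hs) hmass).trans
      (hB _ (ht0.trans_le ha))
  rwa [ENNReal.ofReal_inv_of_pos (by positivity), ← div_eq_mul_inv,
    ENNReal.le_div_iff_mul_le (Or.inl (by positivity)) (Or.inl ENNReal.ofReal_ne_top)]

lemma cumulativeMass_pos {p : ℝ → ℝ} {ν : Measure ℝ}
    (hν : ν = volume.withDensity fun t => ENNReal.ofReal (1 / p t)) (hp : Measurable p)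
    (hp_pos : ∀ t > 0, 0 < p t) {x : ℝ} (hx : 0 < x) (hνx : ν (Ioc 0 x) ≠ ∞) :
    0 < cumulativeMass ν x := by
  refine ENNReal.toReal_pos (ne_of_gt ?_) hνx
  rw [hν]
  exact withDensity_ofReal_pos (by fun_prop) (by simpa using hx)
    fun t ht => one_div_pos.2 (hp_pos t ht.1)

lemma sq_le_two_mul_lintegral_mul_sqrt_cumulativeMass {p f : ℝ → ℝ} {ν : Measure ℝ}
    (hν : ν = volume.withDensity fun t => ENNReal.ofReal (1 / p t)) (hp : Measurable p)
    (hp_pos : ∀ t > 0, 0 < p t) (hf : ContDiff ℝ 1 f) (hf0 : f 0 = 0) {x : ℝ} (hx : 0 < x)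
    (hνx : ν (Ioc 0 x) ≠ ∞) :
    ENNReal.ofReal (f x ^ 2) ≤
      2 * (∫⁻ t in Ioc 0 x, ENNReal.ofReal (deriv f t ^ 2 * p t) *
        ENNReal.ofReal √(cumulativeMass ν t)) * ENNReal.ofReal √(cumulativeMass ν x) := by
  have : NullSingletonClass ν := hν ▸ inferInstance
  set k : ℝ → ℝ := fun t => √(cumulativeMass ν t) * p t
  have hk_pos : ∀ t ∈ Ioc 0 x, 0 < k t := fun t ht =>
    mul_pos (Real.sqrt_pos.2 (cumulativeMass_pos hν hp hp_pos ht.1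
      (ne_top_of_le_ne_top hνx (measure_mono (Ioc_subset_Ioc_right ht.2))))) (hp_pos t ht.1)
  have hftc : f x = ∫ t in Ioc 0 x, deriv f t := by
    rw [← intervalIntegral.integral_of_le hx.le, intervalIntegral.integral_deriv_eq_sub
      (fun t _ => (hf.differentiable one_ne_zero).differentiableAt)
      ((hf.continuous_deriv le_rfl).intervalIntegrable 0 x), hf0, sub_zero]
  have hweight : ∫⁻ t in Ioc 0 x, ENNReal.ofReal (deriv f t ^ 2 * k t) =
      ∫⁻ t in Ioc 0 x, ENNReal.ofReal (deriv f t ^ 2 * p t) *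
        ENNReal.ofReal √(cumulativeMass ν t) := by
    refine setLIntegral_congr_fun measurableSet_Ioc fun t ht => ?_
    have := hp_pos t ht.1
    rw [← ENNReal.ofReal_mul (by positivity), mul_right_comm, mul_assoc]
  have hdual : ∫⁻ t in Ioc 0 x, ENNReal.ofReal (k t)⁻¹ =
      ∫⁻ t in Ioc 0 x, ENNReal.ofReal (√(cumulativeMass ν t))⁻¹ ∂ν := by
    have hdens : ∀ g : ℝ → ℝ≥0∞, Measurable g →
        ∫⁻ t in Ioc 0 x, g t ∂ν = ∫⁻ t in Ioc 0 x, ENNReal.ofReal (1 / p t) * g t := by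
      intro g hg
      rw [hν, setLIntegral_withDensity_eq_setLIntegral_mul _ (by fun_prop) hg measurableSet_Ioc]
      rfl
    rw [hdens _ (by fun_prop)]
    refine setLIntegral_congr_fun measurableSet_Ioc fun t ht => ?_
    have := hp_pos t ht.1
    rw [← ENNReal.ofReal_mul (by positivity), mul_inv, one_div, mul_comm]
  calc ENNReal.ofReal (f x ^ 2) = ‖∫ t in Ioc 0 x, deriv f t‖ₑ ^ 2 := by
        rw [hftc, Real.enorm_eq_ofReal_abs, ← ENNReal.ofReal_pow (abs_nonneg _), sq_abs]
    _ ≤ (∫⁻ t in Ioc 0 x, ENNReal.ofReal (deriv f t ^ 2 * k t)) *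
          ∫⁻ t in Ioc 0 x, ENNReal.ofReal (k t)⁻¹ :=
        enorm_integral_sq_le_lintegral_mul_lintegral_inv _ (hf.continuous_deriv le_rfl).measurable
          (by fun_prop) ((ae_restrict_iff' measurableSet_Ioc).2 (Eventually.of_forall hk_pos))
    _ ≤ _ := by
        rw [hweight, hdual, mul_comm 2, mul_assoc]
        gcongr
        exact lintegral_inv_sqrt_cumulativeMass_le ν hνx

lemma measure_Ioc_ne_top_of_mul_le {ξ ν : Measure ℝ} {B : ℝ≥0∞} (hB : B ≠ ∞)
    (hξ : ∀ x > 0, ξ (Ici x) ≠ 0) (hξν : ∀ x > 0, ξ (Ici x) * ν (Ioc 0 x) ≤ B) (x : ℝ) :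
    ν (Ioc 0 x) ≠ ∞ := by
  rcases le_or_gt x 0 with hx | hx
  · simp [Ioc_eq_empty_of_le hx]
  intro htop
  have := hξν x hx
  rw [htop, ENNReal.mul_top (hξ x hx)] at this
  exact hB (top_le_iff.1 this)

theorem lintegral_sq_le_four_mul_lintegral_deriv_sq {p f : ℝ → ℝ} {ν ξ : Measure ℝ} [SFinite ξ]
    (hν : ν = volume.withDensity fun t => ENNReal.ofReal (1 / p t)) (hp : Measurable p)
    (hp_pos : ∀ t > 0, 0 < p t) (hν_fin : ∀ x, ν (Ioc 0 x) ≠ ∞) {B : ℝ≥0∞}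
    (hB : ∀ x > 0, ξ (Ici x) * ν (Ioc 0 x) ≤ B) (hf : ContDiff ℝ 1 f) (hf0 : f 0 = 0) :
    ∫⁻ x in Ioi 0, ENNReal.ofReal (f x ^ 2) ∂ξ ≤
      4 * B * ∫⁻ x in Ioi 0, ENNReal.ofReal (deriv f x ^ 2 * p x) := by
  set φ : ℝ → ℝ≥0∞ := fun t => ENNReal.ofReal √(cumulativeMass ν t)
  set G : ℝ → ℝ≥0∞ := fun t => ENNReal.ofReal (deriv f t ^ 2 * p t)
  have htail : ∀ t ∈ Ioi (0 : ℝ), G t * φ t * ∫⁻ x in Ici t, φ x ∂ξ ≤ G t * (2 * B) :=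
    fun t ht => by
      rw [mul_assoc]
      gcongr G t * ?_
      exact sqrt_cumulativeMass_mul_lintegral_Ici_le ξ ν hν_fin hB
        (cumulativeMass_pos hν hp hp_pos ht (hν_fin t))
  calc ∫⁻ x in Ioi 0, ENNReal.ofReal (f x ^ 2) ∂ξ
      ≤ ∫⁻ x in Ioi 0, 2 * ((∫⁻ t in Ioc 0 x, G t * φ t) * φ x) ∂ξ :=
        setLIntegral_mono' measurableSet_Ioi fun x hx =>
          (sq_le_two_mul_lintegral_mul_sqrt_cumulativeMass hν hp hp_pos hf hf0 hx
            (hν_fin x)).trans_eq (mul_assoc _ _ _)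
    _ = 2 * ∫⁻ t in Ioi 0, G t * φ t * ∫⁻ x in Ici t, φ x ∂ξ := by
        rw [lintegral_const_mul' _ _ (by simp),
          lintegral_Ioi_lintegral_Ioc_mul ξ volume 0 (by fun_prop) (by fun_prop)]
    _ ≤ 2 * ∫⁻ t in Ioi 0, G t * (2 * B) := by
        gcongr 2 * ?_
        exact setLIntegral_mono' measurableSet_Ioi htail
    _ = 4 * B * ∫⁻ t in Ioi 0, G t := by
        rw [lintegral_mul_const _ (by fun_prop)]
        ring

theorem stmt_2_general (pxi pnu : ℝ → ℝ)
    (hpxi_meas : Measurable pxi) (hpnu_meas : Measurable pnu)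
    (hpxi_pos : ∀ x ∈ Set.Ici (0 : ℝ), 0 < pxi x)
    (hpnu_pos : ∀ x ∈ Set.Ici (0 : ℝ), 0 < pnu x)
    (B : ℝ≥0∞)
    (hB : B = ⨆ x ∈ Set.Ioi (0 : ℝ),
      (∫⁻ t in Set.Ici x, ENNReal.ofReal (pxi t)) *
        ∫⁻ t in Set.Ioc (0 : ℝ) x, ENNReal.ofReal (1 / pnu t))
    (hBfin : B < ⊤)
    (f : ℝ → ℝ) (hf : ContDiff ℝ 1 f)
    (hf0 : f 0 = 0) :
    (∫⁻ x in Set.Ici (0 : ℝ), ENNReal.ofReal (f x ^ 2 * pxi x)) ≤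
      4 * B * ∫⁻ x in Set.Ici (0 : ℝ), ENNReal.ofReal (deriv f x ^ 2 * pnu x) := by
  set ν := volume.withDensity fun t => ENNReal.ofReal (1 / pnu t) with hν
  set ξ := volume.withDensity fun t => ENNReal.ofReal (pxi t)
  have hξν : ∀ x > 0, ξ (Ici x) * ν (Ioc 0 x) ≤ B := fun x hx => by
    rw [hB, withDensity_apply _ measurableSet_Ici, withDensity_apply _ measurableSet_Ioc]
    exact le_iSup₂_of_le x hx le_rfl
  have hξ : ∀ x > 0, ξ (Ici x) ≠ 0 := fun x hx =>
    (withDensity_ofReal_pos hpxi_meas (by simp : 0 < volume (Ici x))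
      fun t ht => hpxi_pos t (hx.le.trans ht)).ne'
  calc ∫⁻ x in Ici 0, ENNReal.ofReal (f x ^ 2 * pxi x)
      = ∫⁻ x in Ioi 0, ENNReal.ofReal (f x ^ 2) ∂ξ := by
        rw [← Measure.restrict_congr_set Ioi_ae_eq_Ici,
          setLIntegral_withDensity_eq_setLIntegral_mul _ (by fun_prop)
            (hf.continuous.measurable.pow_const 2).ennreal_ofReal measurableSet_Ioi]
        refine setLIntegral_congr_fun measurableSet_Ioi fun x hx => ?_
        rw [Pi.mul_apply, ← ENNReal.ofReal_mul (hpxi_pos x (mem_Ici_of_Ioi hx)).le, mul_comm]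
    _ ≤ 4 * B * ∫⁻ x in Ioi 0, ENNReal.ofReal (deriv f x ^ 2 * pnu x) :=
        lintegral_sq_le_four_mul_lintegral_deriv_sq hν hpnu_meas (fun t ht => hpnu_pos t ht.le)
          (measure_Ioc_ne_top_of_mul_le hBfin.ne hξ hξν) hξν hf hf0
    _ ≤ 4 * B * ∫⁻ x in Ici 0, ENNReal.ofReal (deriv f x ^ 2 * pnu x) := by
        gcongr
        exact Ioi_subset_Ici_self

theorem stmt_2 (pxi pnu : ℝ → ℝ)
    (hpxi_meas : Measurable pxi) (hpnu_meas : Measurable pnu)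
    (hpxi_pos : ∀ x ∈ Set.Ici (0 : ℝ), 0 < pxi x)
    (hpnu_pos : ∀ x ∈ Set.Ici (0 : ℝ), 0 < pnu x)
    (hpnu_loc : LocallyIntegrableOn pnu (Set.Ici 0))
    (B : ℝ≥0∞)
    (hB : B = ⨆ x ∈ Set.Ioi (0 : ℝ),
      (∫⁻ t in Set.Ici x, ENNReal.ofReal (pxi t)) *
        ∫⁻ t in Set.Ioc (0 : ℝ) x, ENNReal.ofReal (1 / pnu t))
    (hBfin : B < ⊤)
    (f : ℝ → ℝ) (hf : ContDiff ℝ 1 f) (hf_supp : HasCompactSupport f)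
    (hf0 : f 0 = 0) :
    (∫⁻ x in Set.Ici (0 : ℝ), ENNReal.ofReal (f x ^ 2 * pxi x)) ≤
      4 * B * ∫⁻ x in Set.Ici (0 : ℝ), ENNReal.ofReal (deriv f x ^ 2 * pnu x) :=
  stmt_2_general pxi pnu hpxi_meas hpnu_meas hpxi_pos hpnu_pos B hB hBfin f hf hf0
end

section
/- Let μ be a Borel probability measure on ℝ and C > 0. Suppose that for every smooth function f : ℝ → ℝ of the form f² = 1 + g with g smooth and compactly supported and ∫ g dμ = 0, the log-Sobolev inequality (C/2)·(∫ f² log(f²) dμ) ≤ ∫ (f')² dμ holds. Then for every smooth compactly supported g : ℝ → ℝ with ∫ g dμ = 0, the Poincaré inequality C ∫ g² dμ ≤ ∫ (g')² dμ holds. -/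
/-!
Apply the log-Sobolev inequality to `f = √(1 + ε g)`, where `|g| ≤ M` and `ε M < 1`.
The elementary bound `(1 + t) log (1 + t) ≥ t + t² / (2 + |t|)` together with `∫ g = 0` bounds
the entropy of `f²` below by `ε² ∫ g² / (2 + ε M)`, while
`f'² = ε² g'² / (4 (1 + ε g)) ≤ ε² g'² / (4 (1 - ε M))`. Hence
`C ∫ g² ≤ (2 + ε M) / (2 (1 - ε M)) ∫ g'²` for all small `ε > 0`; let `ε → 0⁺`.
-/

open MeasureTheory Real Filter Topology

def SatisfiesLogSobolev (μ : Measure ℝ) (C : ℝ) : Prop :=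
  ∀ f g : ℝ → ℝ, ContDiff ℝ (⊤ : ℕ∞) f → ContDiff ℝ (⊤ : ℕ∞) g →
    HasCompactSupport g → (∀ x, f x ^ 2 = 1 + g x) → (∫ x, g x ∂μ) = 0 →
    C / 2 * ∫ x, f x ^ 2 * Real.log (f x ^ 2) ∂μ ≤ ∫ x, deriv f x ^ 2 ∂μ

theorem Real.add_sq_div_two_add_abs_le_mul_log {t : ℝ} (ht : -1 < t) :
    t + t ^ 2 / (2 + |t|) ≤ (1 + t) * log (1 + t) := by
  have hpos : 0 < 1 + t := by linarith
  rcases le_or_gt 0 t with ht0 | ht0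
  · have hlog := le_log_one_add_of_nonneg ht0
    calc t + t ^ 2 / (2 + |t|) = (1 + t) * (2 * t / (t + 2)) := by
          rw [abs_of_nonneg ht0]; field_simp; ring
      _ ≤ (1 + t) * log (1 + t) := by gcongr
  · have hsinh : sinh (log (1 + t)) ≤ log (1 + t) :=
      sinh_le_self_iff.mpr (log_nonpos hpos.le (by linarith))
    rw [sinh_log hpos] at hsinh
    have hsq : t ^ 2 / (2 + |t|) ≤ t ^ 2 / 2 := by
      gcongr; exact le_add_of_nonneg_right (abs_nonneg t)
    calc t + t ^ 2 / (2 + |t|) ≤ (1 + t) * (((1 + t) - (1 + t)⁻¹) / 2) := by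
          have : (1 + t) * (((1 + t) - (1 + t)⁻¹) / 2) = t + t ^ 2 / 2 := by
            field_simp; ring
          linarith
      _ ≤ (1 + t) * log (1 + t) := by gcongr

theorem sq_div_mul_integral_sq_le_integral_mul_log {X : Type*} [MeasurableSpace X]
    {μ : Measure X} {g : X → ℝ} {M ε : ℝ} (hg : Integrable g μ)
    (hg2 : Integrable (fun x ↦ g x ^ 2) μ)
    (hent : Integrable (fun x ↦ (1 + ε * g x) * log (1 + ε * g x)) μ)
    (hmean : ∫ x, g x ∂μ = 0) (hgM : ∀ x, |g x| ≤ M) (hε : 0 ≤ ε) (hεM : ε * M < 1) :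
    ε ^ 2 / (2 + ε * M) * ∫ x, g x ^ 2 ∂μ ≤ ∫ x, (1 + ε * g x) * log (1 + ε * g x) ∂μ := by
  calc ε ^ 2 / (2 + ε * M) * ∫ x, g x ^ 2 ∂μ
      = ∫ x, (ε * g x + ε ^ 2 / (2 + ε * M) * g x ^ 2) ∂μ := by
        rw [integral_add (hg.const_mul ε) (hg2.const_mul _), integral_const_mul,
          integral_const_mul, hmean, mul_zero, zero_add]
    _ ≤ ∫ x, (1 + ε * g x) * log (1 + ε * g x) ∂μ := by
        refine integral_mono ((hg.const_mul ε).add (hg2.const_mul _)) hent fun x ↦ ?_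
        have habs : |ε * g x| ≤ ε * M := by
          rw [abs_mul, abs_of_nonneg hε]; exact mul_le_mul_of_nonneg_left (hgM x) hε
        have hM : 0 ≤ ε * M := (abs_nonneg _).trans habs
        have hlt : -1 < ε * g x := by linarith [neg_abs_le (ε * g x)]
        calc ε * g x + ε ^ 2 / (2 + ε * M) * g x ^ 2
            = ε * g x + (ε * g x) ^ 2 / (2 + ε * M) := by ring
          _ ≤ ε * g x + (ε * g x) ^ 2 / (2 + |ε * g x|) := by gcongr
          _ ≤ (1 + ε * g x) * log (1 + ε * g x) := add_sq_div_two_add_abs_le_mul_log hlt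

theorem Continuous.integrable_comp_of_hasCompactSupport {X : Type*} [TopologicalSpace X]
    [MeasurableSpace X] [OpensMeasurableSpace X] {μ : Measure X} [IsFiniteMeasureOnCompacts μ]
    {g : X → ℝ} {φ : ℝ → ℝ} (hφ : Continuous φ) (hφ0 : φ 0 = 0) (hg : Continuous g)
    (hgs : HasCompactSupport g) : Integrable (fun x ↦ φ (g x)) μ :=
  (hφ.comp hg).integrable_of_hasCompactSupport (hgs.comp_left hφ0)

section Perturbation

variable {g : ℝ → ℝ} {ε M : ℝ}

theorem deriv_sqrt_one_add_mul_sq (hg : Differentiable ℝ g) {x : ℝ} (hx : 0 < 1 + ε * g x) :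
    deriv (fun y ↦ √(1 + ε * g y)) x ^ 2 = ε ^ 2 * deriv g x ^ 2 / (4 * (1 + ε * g x)) := by
  rw [((((hg x).hasDerivAt.const_mul ε).const_add 1).sqrt hx.ne').deriv, div_pow, mul_pow,
    mul_pow, sq_sqrt hx.le]
  norm_num

theorem integral_deriv_sqrt_one_add_mul_sq_le {μ : Measure ℝ} (hg : Differentiable ℝ g)
    (hg' : Integrable (fun x ↦ deriv g x ^ 2) μ) (hgM : ∀ x, |g x| ≤ M) (hε : 0 ≤ ε)
    (hεM : ε * M < 1) :
    ∫ x, deriv (fun y ↦ √(1 + ε * g y)) x ^ 2 ∂μ ≤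
      ε ^ 2 / (4 * (1 - ε * M)) * ∫ x, deriv g x ^ 2 ∂μ := by
  rw [← integral_const_mul]
  refine integral_mono_of_nonneg (.of_forall fun x ↦ sq_nonneg _) (hg'.const_mul _)
    (.of_forall fun x ↦ ?_)
  have hlow : 1 - ε * M ≤ 1 + ε * g x := by
    nlinarith [neg_abs_le (g x), hgM x]
  dsimp only
  rw [deriv_sqrt_one_add_mul_sq hg (by linarith), div_mul_eq_mul_div]
  gcongr

end Perturbation

theorem SatisfiesLogSobolev.mul_integral_sq_le {μ : Measure ℝ} [IsFiniteMeasureOnCompacts μ]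
    {C : ℝ} (hLS : SatisfiesLogSobolev μ C) (hC : 0 ≤ C) {g : ℝ → ℝ}
    (hg : ContDiff ℝ (⊤ : ℕ∞) g) (hgs : HasCompactSupport g) (hmean : ∫ x, g x ∂μ = 0)
    {M ε : ℝ} (hgM : ∀ x, |g x| ≤ M) (hε : 0 < ε) (hεM : ε * M < 1) :
    C * ∫ x, g x ^ 2 ∂μ ≤ (2 + ε * M) / (2 * (1 - ε * M)) * ∫ x, deriv g x ^ 2 ∂μ := by
  have hpos (x : ℝ) : 0 < 1 + ε * g x := by
    nlinarith [neg_abs_le (g x), hgM x]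
  have hf : ContDiff ℝ (⊤ : ℕ∞) fun x ↦ √(1 + ε * g x) :=
    contDiff_iff_contDiffAt.mpr fun x ↦
      (contDiff_const.add (contDiff_const.mul hg)).contDiffAt.sqrt (hpos x).ne'
  have hLSε := hLS _ _ hf (contDiff_const.mul hg) (hgs.mul_left)
    (fun x ↦ sq_sqrt (hpos x).le) (by rw [integral_const_mul, hmean, mul_zero])
  simp only [sq_sqrt (hpos _).le] at hLSε
  have hent := sq_div_mul_integral_sq_le_integral_mul_log (μ := μ)
    (hg.continuous.integrable_of_hasCompactSupport hgs)
    ((continuous_pow 2).integrable_comp_of_hasCompactSupport (zero_pow two_ne_zero)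
      hg.continuous hgs)
    (Continuous.integrable_comp_of_hasCompactSupport (φ := fun t ↦ (1 + ε * t) * log (1 + ε * t))
      (by fun_prop) (by simp) hg.continuous hgs)
    hmean hgM hε.le hεM
  have hderiv := integral_deriv_sqrt_one_add_mul_sq_le (μ := μ) (hg.differentiable (by simp))
    ((continuous_pow 2).integrable_comp_of_hasCompactSupport (zero_pow two_ne_zero)
      (hg.continuous_deriv (by simp)) hgs.deriv) hgM hε.le hεM
  have hεM0 : 0 ≤ ε * M := mul_nonneg hε.le ((abs_nonneg _).trans (hgM 0))
  calc C * ∫ x, g x ^ 2 ∂μ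
      = 2 * (2 + ε * M) / ε ^ 2 * (C / 2 * (ε ^ 2 / (2 + ε * M) * ∫ x, g x ^ 2 ∂μ)) := by
        field_simp
    _ ≤ 2 * (2 + ε * M) / ε ^ 2 * (ε ^ 2 / (4 * (1 - ε * M)) * ∫ x, deriv g x ^ 2 ∂μ) := by
        refine mul_le_mul_of_nonneg_left ?_ (by positivity)
        exact (mul_le_mul_of_nonneg_left hent (by positivity)).trans (hLSε.trans hderiv)
    _ = (2 + ε * M) / (2 * (1 - ε * M)) * ∫ x, deriv g x ^ 2 ∂μ := by
        field_simp
        ring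

theorem stmt_3 (μ : Measure ℝ) [IsProbabilityMeasure μ] (C : ℝ) (hC : 0 < C)
    (hLS : ∀ f g : ℝ → ℝ, ContDiff ℝ (⊤ : ℕ∞) f → ContDiff ℝ (⊤ : ℕ∞) g →
      HasCompactSupport g → (∀ x, f x ^ 2 = 1 + g x) → (∫ x, g x ∂μ) = 0 →
      C / 2 * ∫ x, f x ^ 2 * Real.log (f x ^ 2) ∂μ ≤ ∫ x, deriv f x ^ 2 ∂μ) :
    ∀ g : ℝ → ℝ, ContDiff ℝ (⊤ : ℕ∞) g → HasCompactSupport g → (∫ x, g x ∂μ) = 0 →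
      C * ∫ x, g x ^ 2 ∂μ ≤ ∫ x, deriv g x ^ 2 ∂μ := by
  intro g hg hgs hmean
  obtain ⟨M, hgM⟩ := hgs.exists_bound_of_continuous hg.continuous
  have hlim : Tendsto (fun ε ↦ (2 + ε * M) / (2 * (1 - ε * M)) * ∫ x, deriv g x ^ 2 ∂μ)
      (𝓝[>] 0) (𝓝 (∫ x, deriv g x ^ 2 ∂μ)) := by
    have hcont : ContinuousAt
        (fun ε ↦ (2 + ε * M) / (2 * (1 - ε * M)) * ∫ x, deriv g x ^ 2 ∂μ) 0 := by
      fun_prop (disch := norm_num)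
    simpa using tendsto_nhdsWithin_of_tendsto_nhds hcont.tendsto
  have hsmall : ∀ᶠ ε in 𝓝[>] (0 : ℝ), ε * M < 1 :=
    tendsto_nhdsWithin_of_tendsto_nhds ((continuous_mul_const M).tendsto' 0 0 (zero_mul M))
      |>.eventually (gt_mem_nhds one_pos)
  refine ge_of_tendsto hlim ?_
  filter_upwards [self_mem_nhdsWithin, hsmall] with ε hε hεM
  exact SatisfiesLogSobolev.mul_integral_sq_le hLS hC.le hg hgs hmean
    (fun x ↦ (Real.norm_eq_abs _).symm.trans_le (hgM x)) hε hεM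
end

section
/- Let β > 0 and let x₀ < x₁ be real numbers with (x₁ − x₀)²·β > π². If f : [x₀, x₁] → ℝ is twice continuously differentiable, nonnegative, and satisfies f''(x) + β·f(x) ≤ 0 for all x in (x₀, x₁), then f is identically zero on [x₀, x₁]. -/
/-! The comparison function `g x = sin (k (x - x₀))` with `k = π / (x₁ - x₀)` solves `g'' + k² g = 0`,
is positive inside `[x₀, x₁]` and vanishes at both ends, while `k² < β`. The Wronskian
`W = f' g - f g'` has derivative `(f'' + k² f) g ≤ (k² - β) f g ≤ 0`, so it is antitone; its
boundary values `W x₀ = -k f x₀ ≤ 0 ≤ k f x₁ = W x₁` then force `W ≡ 0`. Hence `W' = 0` inside,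
so `(β - k²) f g ≤ 0` there, which gives `f = 0` inside and, by continuity, on `[x₀, x₁]`. -/

open Set Filter Topology

section Derivatives

variable {f : ℝ → ℝ} {s : Set ℝ} {x : ℝ}

theorem ContDiffOn.hasDerivAt_derivWithin (hf : ContDiffOn ℝ 1 f s) (hs : s ∈ 𝓝 x) :
    HasDerivAt f (derivWithin f s x) x := by
  rw [derivWithin_of_mem_nhds hs]
  exact ((hf.contDiffAt hs).differentiableAt one_ne_zero).hasDerivAt

theorem ContDiffOn.hasDerivAt_derivWithin_deriv_deriv (hf : ContDiffOn ℝ 2 f s)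
    (hs' : UniqueDiffOn ℝ s) (hs : s ∈ 𝓝 x) :
    HasDerivAt (derivWithin f s) (deriv (deriv f) x) x := by
  have hderiv : derivWithin f s =ᶠ[𝓝 x] deriv f := by
    filter_upwards [eventually_mem_nhds_iff.2 hs] with y hy using derivWithin_of_mem_nhds hy
  rw [← hderiv.deriv_eq, ← derivWithin_of_mem_nhds hs]
  exact (hf.derivWithin (m := 1) hs' le_rfl).hasDerivAt_derivWithin hs

end Derivatives

theorem AntitoneOn.eqOn_zero_of_nonpos_of_nonneg {α : Type*} [Preorder α] {a b : α} {W : α → ℝ}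
    (hW : AntitoneOn W (Icc a b)) (ha : W a ≤ 0) (hb : 0 ≤ W b) : EqOn W 0 (Icc a b) := fun _ hx =>
  le_antisymm ((hW (left_mem_Icc.2 (hx.1.trans hx.2)) hx hx.1).trans ha)
    (hb.trans (hW hx (right_mem_Icc.2 (hx.1.trans hx.2)) hx.2))

section SturmComparison

def wronskian (f f' g g' : ℝ → ℝ) (x : ℝ) : ℝ :=
  f' x * g x - f x * g' x

variable {a b μ β : ℝ} {f f' f'' g g' : ℝ → ℝ}

theorem hasDerivAt_wronskian {x : ℝ} (hf : HasDerivAt f (f' x) x) (hf' : HasDerivAt f' (f'' x) x)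
    (hg : HasDerivAt g (g' x) x) (hg' : HasDerivAt g' (-μ * g x) x) :
    HasDerivAt (wronskian f f' g g') ((f'' x + μ * f x) * g x) x := by
  exact ((hf'.mul hg).sub (hf.mul hg')).congr_deriv (by ring)

theorem eqOn_zero_of_sturm_comparison (hab : a < b) (hμβ : μ < β)
    (hf : ContinuousOn f (Icc a b)) (hf' : ContinuousOn f' (Icc a b))
    (hff' : ∀ x ∈ Ioo a b, HasDerivAt f (f' x) x) (hf'f'' : ∀ x ∈ Ioo a b, HasDerivAt f' (f'' x) x)
    (hfnn : ∀ x ∈ Icc a b, 0 ≤ f x) (hode : ∀ x ∈ Ioo a b, f'' x + β * f x ≤ 0)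
    (hgg' : ∀ x, HasDerivAt g (g' x) x) (hg'g'' : ∀ x, HasDerivAt g' (-μ * g x) x)
    (hgpos : ∀ x ∈ Ioo a b, 0 < g x) (hga : g a = 0) (hgb : g b = 0)
    (hg'a : 0 ≤ g' a) (hg'b : g' b ≤ 0) :
    EqOn f 0 (Icc a b) := by
  set W := wronskian f f' g g'
  have hW' (x : ℝ) (hx : x ∈ Ioo a b) : HasDerivAt W ((f'' x + μ * f x) * g x) x :=
    hasDerivAt_wronskian (hff' x hx) (hf'f'' x hx) (hgg' x) (hg'g'' x)
  have hW'_nonpos (x : ℝ) (hx : x ∈ Ioo a b) : (f'' x + μ * f x) * g x ≤ 0 := by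
    have hfx := hfnn x (Ioo_subset_Icc_self hx)
    exact mul_nonpos_of_nonpos_of_nonneg (by nlinarith [hode x hx]) (hgpos x hx).le
  have hW_anti : AntitoneOn W (Icc a b) := by
    have hg_cont : Continuous g := continuous_iff_continuousAt.2 fun x => (hgg' x).continuousAt
    have hg'_cont : Continuous g' := continuous_iff_continuousAt.2 fun x => (hg'g'' x).continuousAt
    refine antitoneOn_of_hasDerivWithinAt_nonpos (f' := fun x => (f'' x + μ * f x) * g x)
      (convex_Icc a b) ((hf'.mul hg_cont.continuousOn).sub (hf.mul hg'_cont.continuousOn)) ?_ ?_ <;>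
      rw [interior_Icc]
    exacts [fun x hx => (hW' x hx).hasDerivWithinAt, hW'_nonpos]
  have hW_zero : EqOn W 0 (Icc a b) := by
    refine hW_anti.eqOn_zero_of_nonpos_of_nonneg ?_ ?_
    · simpa [W, wronskian, hga] using mul_nonneg (hfnn a (left_mem_Icc.2 hab.le)) hg'a
    · simpa [W, wronskian, hgb] using
        mul_nonpos_of_nonneg_of_nonpos (hfnn b (right_mem_Icc.2 hab.le)) hg'b
  have hf_zero : EqOn f 0 (Ioo a b) := by
    intro x hx
    have hW_const : W =ᶠ[𝓝 x] fun _ => 0 :=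
      eventually_of_mem (Icc_mem_nhds hx.1 hx.2) hW_zero
    have hW'_zero : (f'' x + μ * f x) * g x = 0 :=
      (hW' x hx).unique ((hasDerivAt_const x (0 : ℝ)).congr_of_eventuallyEq hW_const)
    have hfx := hfnn x (Ioo_subset_Icc_self hx)
    have := (mul_eq_zero.1 hW'_zero).resolve_right (hgpos x hx).ne'
    simp only [Pi.zero_apply]
    nlinarith [hode x hx]
  exact hf_zero.of_subset_closure hf continuousOn_const Ioo_subset_Icc_self
    (closure_Ioo hab.ne).symm.subset

end SturmComparison

theorem stmt_9_general (β x₀ x₁ : ℝ) (hx : x₀ < x₁)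
    (hlen : Real.pi ^ 2 < (x₁ - x₀) ^ 2 * β)
    (f : ℝ → ℝ) (hf : ContDiffOn ℝ 2 f (Set.Icc x₀ x₁))
    (hfnn : ∀ x ∈ Set.Icc x₀ x₁, 0 ≤ f x)
    (hode : ∀ x ∈ Set.Ioo x₀ x₁, deriv (deriv f) x + β * f x ≤ 0) :
    ∀ x ∈ Set.Icc x₀ x₁, f x = 0 := by
  have hL : 0 < x₁ - x₀ := sub_pos.2 hx
  set k := Real.pi / (x₁ - x₀)
  have hk : 0 < k := div_pos Real.pi_pos hL
  have hkL : k * (x₁ - x₀) = Real.pi := div_mul_cancel₀ _ hL.ne'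
  have hkβ : k ^ 2 < β := by
    rwa [div_pow, div_lt_iff₀ (by positivity), mul_comm]
  have hlin (x : ℝ) : HasDerivAt (fun x => k * (x - x₀)) k x := by
    simpa using ((hasDerivAt_id x).sub_const x₀).const_mul k
  have hsin (x : ℝ) :
      HasDerivAt (fun x => Real.sin (k * (x - x₀))) (k * Real.cos (k * (x - x₀))) x := by
    simpa [mul_comm] using (hlin x).sin
  have hcos (x : ℝ) : HasDerivAt (fun x => k * Real.cos (k * (x - x₀)))
      (-k ^ 2 * Real.sin (k * (x - x₀))) x := by
    simpa [pow_two, mul_assoc, mul_comm] using ((hlin x).cos).const_mul k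
  have hsin_pos (x : ℝ) (hx : x ∈ Ioo x₀ x₁) : 0 < Real.sin (k * (x - x₀)) :=
    Real.sin_pos_of_pos_of_lt_pi (mul_pos hk (sub_pos.2 hx.1))
      (hkL ▸ mul_lt_mul_of_pos_left (sub_lt_sub_right hx.2 x₀) hk)
  have hnhds (x : ℝ) (hx : x ∈ Ioo x₀ x₁) : Icc x₀ x₁ ∈ 𝓝 x := Icc_mem_nhds hx.1 hx.2
  exact fun x hx' => eqOn_zero_of_sturm_comparison hx hkβ hf.continuousOn
    (hf.continuousOn_derivWithin (uniqueDiffOn_Icc hx) one_le_two)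
    (fun y hy => (hf.of_le one_le_two).hasDerivAt_derivWithin (hnhds y hy))
    (fun y hy => hf.hasDerivAt_derivWithin_deriv_deriv (uniqueDiffOn_Icc hx) (hnhds y hy))
    hfnn hode hsin hcos hsin_pos (by simp) (by simp [hkL]) (by simp [hk.le])
    (by simp [hkL, hk.le]) hx'

theorem stmt_9 (β x₀ x₁ : ℝ) (hβ : 0 < β) (hx : x₀ < x₁)
    (hlen : Real.pi ^ 2 < (x₁ - x₀) ^ 2 * β)
    (f : ℝ → ℝ) (hf : ContDiffOn ℝ 2 f (Set.Icc x₀ x₁))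
    (hfnn : ∀ x ∈ Set.Icc x₀ x₁, 0 ≤ f x)
    (hode : ∀ x ∈ Set.Ioo x₀ x₁, deriv (deriv f) x + β * f x ≤ 0) :
    ∀ x ∈ Set.Icc x₀ x₁, f x = 0 :=
  stmt_9_general β x₀ x₁ hx hlen f hf hfnn hode
end
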